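/- For nonnegative integers k, p and a multi-index γ ∈ ℕ^{m₀} with |γ| = k−1+p, the identity Σ_{j=1}^{m₀} Σ α_j²/(α!β!) = (1/(k!p!))·(k² + (m₀−1)k)·((k−1+p)!/γ!) holds, where the inner sum runs over pairs of multi-indices α, β ∈ ℕ^{m₀} with |α| = k, |β| = p and α + β − σ_j = γ, σ_j being the j-th standard unit multi-index. -/

import Mathlib

/-!
Writing `α = α' + σ_j` turns `α_j² / (α! β!)` into `(α'_j + 1) / (α'! β!)`, where now
`α' + β = γ` and `|α'| = k - 1`, and summing over `j` produces the factor `k - 1 + m₀`.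
What remains is `∑_{α' + β = γ} 1 / (α'! β!) = (k - 1 + p)! / ((k - 1)! p! γ!)`, the
multivariate Vandermonde identity `∑_{|α| = a} ∏ᵢ (γᵢ choose αᵢ) = (|γ| choose a)`, which is read
off from the coefficients of `∏ᵢ (1 + X)^{γᵢ} = (1 + X)^{|γ|}`.
-/

open Finset
open scoped Nat

theorem Finset.sum_piAntidiag_prod_choose {ι : Type*} [DecidableEq ι] (s : Finset ι)
    (γ : ι → ℕ) (a : ℕ) :
    ∑ x ∈ s.piAntidiag a, ∏ i ∈ s, (γ i).choose (x i) = (∑ i ∈ s, γ i).choose a := by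
  have h := PowerSeries.coeff_prod
    (fun i => Polynomial.coeToPowerSeries.ringHom ((1 + Polynomial.X) ^ γ i : Polynomial ℕ)) a s
  rw [← map_prod, prod_pow_eq_pow_sum] at h
  simp only [Polynomial.coeToPowerSeries.ringHom_apply, Polynomial.coeff_coe,
    Polynomial.coeff_one_add_X_pow, Nat.cast_id] at h
  rw [h, finsuppAntidiag, sum_map]
  exact (sum_attach _ _).symm

section MultiIndex

variable {ι : Type*} [Fintype ι]

def splittings [DecidableEq ι] (a b : ℕ) (γ : ι → ℕ) : Finset ((ι → ℕ) × (ι → ℕ)) :=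
  (piAntidiag univ a ×ˢ piAntidiag univ b).filter fun ab => ab.1 + ab.2 = γ

theorem mem_splittings [DecidableEq ι] {a b : ℕ} {γ : ι → ℕ} {ab : (ι → ℕ) × (ι → ℕ)} :
    ab ∈ splittings a b γ ↔ ∑ i, ab.1 i = a ∧ ∑ i, ab.2 i = b ∧ ab.1 + ab.2 = γ := by
  simp [splittings, and_assoc]

theorem one_div_prod_factorial_mul_prod_factorial (α β : ι → ℕ) :
    1 / ((∏ i, ((α i)! : ℝ)) * ∏ i, ((β i)! : ℝ)) =
      (∏ i, ((α i + β i).choose (α i) : ℝ)) / ∏ i, ((α i + β i)! : ℝ) := by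
  rw [← prod_div_distrib, one_div, ← prod_mul_distrib, ← prod_inv_distrib]
  refine prod_congr rfl fun i _ => ?_
  rw [Nat.cast_add_choose, div_div_cancel_left' (by positivity), mul_inv]

theorem sum_splittings_one_div [DecidableEq ι] {a b : ℕ} {γ : ι → ℕ}
    (hγ : ∑ i, γ i = a + b) :
    ∑ ab ∈ splittings a b γ, 1 / ((∏ i, ((ab.1 i)! : ℝ)) * ∏ i, ((ab.2 i)! : ℝ)) =
      (a + b)! / (a ! * b ! * ∏ i, ((γ i)! : ℝ)) := by
  calc _ = ∑ α ∈ piAntidiag univ a, (∏ i, ((γ i).choose (α i) : ℝ)) / ∏ i, ((γ i)! : ℝ) := by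
        refine sum_of_injOn Prod.fst ?_ ?_ ?_ ?_
        · rintro ⟨α, β⟩ hαβ ⟨α', β'⟩ hαβ' (rfl : α = α')
          obtain ⟨-, -, h⟩ := mem_splittings.1 hαβ
          obtain ⟨-, -, h'⟩ := mem_splittings.1 hαβ'
          exact Prod.ext rfl (add_left_cancel (h.trans h'.symm))
        · intro ab hab
          simpa using (mem_splittings.1 hab).1
        · intro α hα hα'
          have hα : ∑ i, α i = a := by simpa using hα
          by_cases hle : α ≤ γ
          · refine absurd ⟨(α, γ - α),
              mem_splittings.2 ⟨hα, ?_, add_tsub_cancel_of_le hle⟩, rfl⟩ hα'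
            change ∑ i, (γ i - α i) = b
            rw [sum_tsub_distrib _ fun i _ => hle i, hγ, hα, Nat.add_sub_cancel_left]
          · obtain ⟨i, hi⟩ : ∃ i, γ i < α i := by simpa [Pi.le_def] using hle
            rw [prod_eq_zero (mem_univ i) (by simp [Nat.choose_eq_zero_of_lt hi]), zero_div]
        · rintro ⟨α, β⟩ hαβ
          obtain ⟨-, -, rfl⟩ := mem_splittings.1 hαβ
          exact one_div_prod_factorial_mul_prod_factorial α β
    _ = ((a + b).choose a : ℝ) / ∏ i, ((γ i)! : ℝ) := by
        rw [← sum_div, ← hγ, ← Finset.sum_piAntidiag_prod_choose]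
        push_cast
        rfl
    _ = _ := by rw [Nat.cast_add_choose, div_div]

theorem prod_factorial_add_single [DecidableEq ι] (α : ι → ℕ) (j : ι) :
    ∏ i, ((α + Pi.single j 1 : ι → ℕ) i)! = (α j + 1) * ∏ i, (α i)! := by
  rw [Fintype.prod_eq_mul_prod_compl j, Fintype.prod_eq_mul_prod_compl j (fun i => (α i)!),
    Pi.add_apply, Pi.single_eq_same, Nat.factorial_succ, mul_assoc]
  congr 2
  refine prod_congr rfl fun i hi => ?_
  rw [Pi.add_apply, Pi.single_eq_of_ne (by simpa using hi), add_zero]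

theorem add_single_mem_splittings_iff [DecidableEq ι] {a b : ℕ} {γ α β : ι → ℕ} (j : ι) :
    (α + Pi.single j 1, β) ∈ splittings (a + 1) b (γ + Pi.single j 1) ↔
      (α, β) ∈ splittings a b γ := by
  simp only [mem_splittings, Pi.add_apply, sum_add_distrib, Fintype.sum_pi_single',
    add_right_comm α, add_left_inj]

theorem sum_splittings_add_single [DecidableEq ι] {a b : ℕ} {γ : ι → ℕ} (j : ι) :
    ∑ ab ∈ splittings (a + 1) b (γ + Pi.single j 1),
        (ab.1 j : ℝ) ^ 2 / ((∏ i, ((ab.1 i)! : ℝ)) * ∏ i, ((ab.2 i)! : ℝ)) =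
      ∑ ab ∈ splittings a b γ,
        ((ab.1 j : ℝ) + 1) / ((∏ i, ((ab.1 i)! : ℝ)) * ∏ i, ((ab.2 i)! : ℝ)) := by
  symm
  refine sum_of_injOn (fun ab => (ab.1 + Pi.single j 1, ab.2)) ?_ ?_ ?_ ?_
  · rintro ⟨α, β⟩ - ⟨α', β'⟩ - h
    simpa using h
  · rintro ⟨α, β⟩ h
    exact (add_single_mem_splittings_iff j).2 h
  · rintro ⟨α, β⟩ hαβ hα
    suffices α j = 0 by simp [this]
    by_contra hj
    have hle : Pi.single j 1 ≤ α := fun i => by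
      rcases eq_or_ne i j with rfl | hi <;> simp [*, Nat.one_le_iff_ne_zero]
    refine hα ⟨(α - Pi.single j 1, β), (add_single_mem_splittings_iff j).1 ?_, ?_⟩
    · rwa [tsub_add_cancel_of_le hle]
    · simp only [tsub_add_cancel_of_le hle]
  · rintro ⟨α, β⟩ -
    have h : ∏ i, (((α + Pi.single j 1 : ι → ℕ) i)! : ℝ) = (α j + 1) * ∏ i, ((α i)! : ℝ) := by
      exact_mod_cast prod_factorial_add_single α j
    dsimp only
    rw [h, Pi.add_apply, Pi.single_eq_same]
    push_cast
    field_simp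

theorem sum_sum_splittings_add_single [DecidableEq ι] {a b : ℕ} {γ : ι → ℕ}
    (hγ : ∑ i, γ i = a + b) :
    ∑ j, ∑ ab ∈ splittings (a + 1) b (γ + Pi.single j 1),
        (ab.1 j : ℝ) ^ 2 / ((∏ i, ((ab.1 i)! : ℝ)) * ∏ i, ((ab.2 i)! : ℝ)) =
      (a + Fintype.card ι) * ((a + b)! / (a ! * b ! * ∏ i, ((γ i)! : ℝ))) := by
  simp_rw [sum_splittings_add_single]
  rw [sum_comm, ← sum_splittings_one_div hγ, mul_sum]
  refine sum_congr rfl fun ab hab => ?_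
  have hα : ∑ i, (ab.1 i : ℝ) = a := by exact_mod_cast (mem_splittings.1 hab).1
  rw [← sum_div, sum_add_distrib, hα, mul_one_div]
  simp

end MultiIndex

/-- Lemma A7 of Iooss–Lombardi 2005: for a multi-index `γ` with `|γ| = k−1+p`,
`Σ_{j=1}^{m₀} Σ_{|α|=k, |β|=p, α+β−σ_j=γ} α_j²/(α!β!)
  = (1/(k!p!))(k² + (m₀−1)k)((k−1+p)!/γ!)`. -/
theorem stmt5 (m₀ k p : ℕ) (γ : Fin m₀ → ℕ) (hγ : ∑ i, γ i = k - 1 + p) :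
    ∑ j : Fin m₀,
      ∑ ab ∈ (Finset.Nat.antidiagonalTuple m₀ k ×ˢ Finset.Nat.antidiagonalTuple m₀ p).filter
          (fun ab => ab.1 + ab.2 = γ + Pi.single j 1),
        ((ab.1 j : ℝ)) ^ 2 /
          ((∏ i, ((ab.1 i).factorial : ℝ)) * ∏ i, ((ab.2 i).factorial : ℝ)) =
      1 / ((k.factorial : ℝ) * (p.factorial : ℝ)) * ((k : ℝ) ^ 2 + ((m₀ : ℝ) - 1) * k) *
        (((k - 1 + p).factorial : ℝ) / ∏ i, ((γ i).factorial : ℝ)) := by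
  simp_rw [← piAntidiag_univ_fin_eq_antidiagonalTuple]
  cases k with
  | zero =>
    refine (sum_eq_zero fun j _ => sum_eq_zero fun ab hab => ?_).trans (by simp)
    have hα : ab.1 = 0 := by simpa using (mem_product.1 (mem_filter.1 hab).1).1
    simp [hα]
  | succ k =>
    rw [Nat.add_sub_cancel] at hγ ⊢
    have h := sum_sum_splittings_add_single hγ
    unfold splittings at h
    rw [h, Nat.factorial_succ, Fintype.card_fin]
    push_cast
    field_simp
    ring
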